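/- Let (Ω, F, P) be a probability space, ε : Ω → ℝⁿ a random vector with independent, square-integrable coordinates satisfying E[ε_i] = 0 and E[ε_i²] = σ² for each i, and set Y = Xβ* + ε. Then for every 1 ≤ k < n, E[(1/n) · min_{Q∈P_{k,1}} ‖Q(XXᵀ)Y‖²] ≤ 4 ρ^{2k} · [ (1/n)‖Xβ*‖² + σ² ], where ρ = (√C − 1)/(√C + 1) and C = λ_1/λ_n is the ratio of the largest to the smallest eigenvalue of XXᵀ. (By the polynomial characterization of PLS, min_{Q∈P_{k,1}} ‖Q(XXᵀ)Y‖² equals the PLS residual ‖Y − Xβ̂_k‖² at step k.) -/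

import Mathlib

/-!
Bound the minimum by its value at one polynomial: the Chebyshev polynomial `T_k`, rescaled from
`[-1, 1]` to `[λ_n, λ_1]` and normalised to equal `1` at `0`. On the spectrum it is bounded by
`1 / T_k((λ_1 + λ_n) / (λ_1 - λ_n))`, and writing `(λ_1 + λ_n) / (λ_1 - λ_n)` as
`(ρ + ρ⁻¹) / 2`, the identity `T_k((z + z⁻¹) / 2) = (z ^ k + z ^ (-k)) / 2` makes this at most
`2 ρ ^ k`. The spectral theorem then gives `‖Q(XXᵀ) Y‖² ≤ 4 ρ ^ (2k) ‖Y‖²` for every outcome,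
and `E ‖Y‖² = ‖Xβ*‖² + n σ²` because the noise is centred with variance `σ²`.
-/

open Matrix Polynomial MeasureTheory ProbabilityTheory

namespace Polynomial.Chebyshev

theorem eval_T_real_half_add_inv (n : ℕ) {z : ℝ} (hz : 0 < z) :
    (T ℝ n).eval ((z + z⁻¹) / 2) = (z ^ n + (z ^ n)⁻¹) / 2 := by
  have hcosh (t : ℝ) : Real.cosh t = (Real.exp t + (Real.exp t)⁻¹) / 2 := by
    rw [Real.cosh_eq, Real.exp_neg]
  rw [← Real.exp_log hz, ← hcosh, T_real_cosh, hcosh, Int.cast_natCast, Real.exp_nat_mul]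

end Polynomial.Chebyshev

theorem half_add_inv_div_sub_one_add_one {s : ℝ} (hs : 1 < s) :
    ((s - 1) / (s + 1) + ((s - 1) / (s + 1))⁻¹) / 2 = (s ^ 2 + 1) / (s ^ 2 - 1) := by
  have : s - 1 ≠ 0 := by linarith
  have : s ^ 2 - 1 ≠ 0 := by nlinarith
  rw [inv_div]
  field_simp
  ring

open Chebyshev in
theorem exists_eval_zero_eq_one_abs_eval_le_of_lt {a b : ℝ} (ha : 0 < a) (hab : a < b) (k : ℕ) :
    ∃ Q : ℝ[X], Q.natDegree ≤ k ∧ Q.eval 0 = 1 ∧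
      ∀ x ∈ Set.Icc a b, |Q.eval x| ≤ 2 * ((√(b / a) - 1) / (√(b / a) + 1)) ^ k := by
  set ρ := (√(b / a) - 1) / (√(b / a) + 1)
  set c := (b + a) / (b - a)
  have hs : 1 < √(b / a) :=
    Real.lt_sqrt_of_sq_lt (by rw [one_pow, one_lt_div ha]; exact hab)
  have hρ : 0 < ρ := div_pos (sub_pos.2 hs) (by positivity)
  have hc : (ρ + ρ⁻¹) / 2 = c := by
    rw [half_add_inv_div_sub_one_add_one hs, Real.sq_sqrt (div_pos (ha.trans hab) ha).le,
      div_add_one ha.ne', div_sub_one ha.ne', div_div_div_cancel_right₀ ha.ne']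
  have hTc : (ρ ^ k)⁻¹ / 2 ≤ (T ℝ k).eval c := by
    rw [← hc, eval_T_real_half_add_inv k hρ]
    linarith [pow_pos hρ k]
  have hTc0 : 0 < (T ℝ k).eval c := lt_of_lt_of_le (by positivity) hTc
  -- `T_k` pulled back along the affine map `[a, b] → [-1, 1]`, which sends `0` to `c`
  refine ⟨C ((T ℝ k).eval c)⁻¹ * (T ℝ k).comp (C c - C (2 / (b - a)) * X), ?_, ?_, ?_⟩
  · refine (natDegree_C_mul_le _ _).trans (natDegree_comp_le.trans ?_)
    simpa [natDegree_T] using Nat.mul_le_mul_left k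
      (show (C c - C (2 / (b - a)) * X).natDegree ≤ 1 by compute_degree)
  · simp [eval_comp, hTc0.ne']
  · intro x ⟨hax, hxb⟩
    have hba : 0 < b - a := sub_pos.2 hab
    have hy : |c - 2 / (b - a) * x| ≤ 1 := by
      rw [show c - 2 / (b - a) * x = (b + a - 2 * x) / (b - a) by simp only [c]; field_simp,
        abs_div, abs_of_pos hba, div_le_one hba, abs_le]
      constructor <;> linarith
    simp only [eval_mul, eval_C, eval_comp, eval_sub, eval_X, abs_mul, abs_of_pos (inv_pos.2 hTc0)]
    calc ((T ℝ k).eval c)⁻¹ * |(T ℝ k).eval (c - 2 / (b - a) * x)| ≤ ((T ℝ k).eval c)⁻¹ :=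
          mul_le_of_le_one_right (by positivity) (abs_eval_T_real_le_one _ hy)
      _ ≤ ((ρ ^ k)⁻¹ / 2)⁻¹ := inv_anti₀ (by positivity) hTc
      _ = 2 * ρ ^ k := by rw [inv_div, div_inv_eq_mul]

theorem exists_eval_zero_eq_one_abs_eval_le {a b : ℝ} (ha : 0 < a) (hab : a ≤ b) (k : ℕ) :
    ∃ Q : ℝ[X], Q.natDegree ≤ k ∧ Q.eval 0 = 1 ∧
      ∀ x ∈ Set.Icc a b, |Q.eval x| ≤ 2 * ((√(b / a) - 1) / (√(b / a) + 1)) ^ k := by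
  rcases hab.eq_or_lt with rfl | hab
  · refine ⟨(1 - C a⁻¹ * X) ^ k, by compute_degree, by simp, fun x hx => ?_⟩
    obtain rfl : x = a := le_antisymm hx.2 hx.1
    simpa [ha.ne'] using le_mul_of_one_le_left (pow_nonneg le_rfl k) one_le_two
  · exact exists_eval_zero_eq_one_abs_eval_le_of_lt ha hab k

theorem Matrix.aeval_diagonal {R m : Type*} [CommSemiring R] [Fintype m] [DecidableEq m]
    (d : m → R) (Q : R[X]) :
    aeval (diagonal d) Q = diagonal fun i => Q.eval (d i) := by
  rw [← diagonalAlgHom_apply (R := R), aeval_algHom_apply, aeval_pi_apply]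
  simp [diagonalAlgHom_apply]

theorem Matrix.IsHermitian.aeval_eq_conj {m : Type*} [Fintype m] [DecidableEq m]
    {A : Matrix m m ℝ} (hA : A.IsHermitian) (Q : ℝ[X]) :
    aeval A Q = Unitary.conjStarAlgAut ℝ _ hA.eigenvectorUnitary
      (diagonal fun i => Q.eval (hA.eigenvalues i)) := by
  conv_lhs => rw [hA.spectral_theorem]
  rw [aeval_algHom_apply, aeval_diagonal]
  rfl

theorem Matrix.sum_sq_mulVec_of_mem_unitaryGroup {m : Type*} [Fintype m] [DecidableEq m]
    {U : Matrix m m ℝ} (hU : U ∈ unitaryGroup m ℝ) (v : m → ℝ) :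
    ∑ i, (U *ᵥ v) i ^ 2 = ∑ i, v i ^ 2 := by
  have hsq (w : m → ℝ) : ∑ i, w i ^ 2 = w ⬝ᵥ w := by simp [dotProduct, sq]
  have hUU : Uᵀ * U = 1 := (mem_unitaryGroup_iff'.mp hU)
  rw [hsq, hsq, dotProduct_mulVec, vecMul_mulVec, hUU, vecMul_one]

theorem Matrix.IsHermitian.sum_sq_aeval_mulVec_le {m : Type*} [Fintype m] [DecidableEq m]
    {A : Matrix m m ℝ} (hA : A.IsHermitian) {Q : ℝ[X]} {M : ℝ}
    (hM : ∀ i, |Q.eval (hA.eigenvalues i)| ≤ M) (v : m → ℝ) :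
    ∑ i, (aeval A Q *ᵥ v) i ^ 2 ≤ M ^ 2 * ∑ i, v i ^ 2 := by
  set U := hA.eigenvectorUnitary
  set w := (star U : Matrix m m ℝ) *ᵥ v
  have hAv : aeval A Q *ᵥ v =
      (U : Matrix m m ℝ) *ᵥ (diagonal fun i => Q.eval (hA.eigenvalues i)) *ᵥ w := by
    rw [hA.aeval_eq_conj, Unitary.conjStarAlgAut_apply, ← mulVec_mulVec, ← mulVec_mulVec]
  rw [hAv, sum_sq_mulVec_of_mem_unitaryGroup U.2,
    ← sum_sq_mulVec_of_mem_unitaryGroup (star U).2 v, Finset.mul_sum]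
  refine Finset.sum_le_sum fun i _ => ?_
  rw [mulVec_diagonal, mul_pow]
  exact mul_le_mul_of_nonneg_right (sq_le_sq' (abs_le.mp (hM i)).1 (abs_le.mp (hM i)).2)
    (sq_nonneg _)

theorem Matrix.IsHermitian.sInf_sum_sq_aeval_mulVec_le {m : Type*} [Fintype m] [DecidableEq m]
    {A : Matrix m m ℝ} (hA : A.IsHermitian) {a b : ℝ} (ha : 0 < a) (hab : a ≤ b)
    (heig : ∀ i, hA.eigenvalues i ∈ Set.Icc a b) (k : ℕ) (v : m → ℝ) :
    sInf {r : ℝ | ∃ Q : ℝ[X], Q.natDegree ≤ k ∧ Q.eval 0 = 1 ∧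
        r = ∑ i, (aeval A Q *ᵥ v) i ^ 2}
      ≤ 4 * ((√(b / a) - 1) / (√(b / a) + 1)) ^ (2 * k) * ∑ i, v i ^ 2 := by
  obtain ⟨Q, hQdeg, hQ0, hQ⟩ := exists_eval_zero_eq_one_abs_eval_le ha hab k
  refine csInf_le_of_le ?_ ⟨Q, hQdeg, hQ0, rfl⟩ ?_
  · exact ⟨0, by rintro r ⟨Q, -, -, rfl⟩; positivity⟩
  · refine (hA.sum_sq_aeval_mulVec_le (fun i => hQ _ (heig i)) v).trans_eq ?_
    ring

section Noise

variable {Ω ι : Type*} [MeasurableSpace Ω] {P : Measure Ω} [IsProbabilityMeasure P]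

theorem integral_const_add_sq {ε : Ω → ℝ} (hL2 : MemLp ε 2 P) (hmean : ∫ ω, ε ω ∂P = 0)
    (c : ℝ) : ∫ ω, (c + ε ω) ^ 2 ∂P = c ^ 2 + ∫ ω, ε ω ^ 2 ∂P := by
  have hε : Integrable ε P := hL2.integrable one_le_two
  have hlin : Integrable (fun ω => c ^ 2 + 2 * c * ε ω) P :=
    (integrable_const _).add (hε.const_mul _)
  calc ∫ ω, (c + ε ω) ^ 2 ∂P = ∫ ω, (c ^ 2 + 2 * c * ε ω) + ε ω ^ 2 ∂P := by
        congr 1; funext ω; ring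
    _ = c ^ 2 + ∫ ω, ε ω ^ 2 ∂P := by
        rw [integral_add hlin hL2.integrable_sq,
          integral_add (integrable_const _) (hε.const_mul _), integral_const_mul, hmean]
        simp

theorem integrable_sum_sq_const_add [Fintype ι] {ε : Ω → ι → ℝ}
    (hL2 : ∀ i, MemLp (fun ω => ε ω i) 2 P) (b : ι → ℝ) :
    Integrable (fun ω => ∑ i, (b i + ε ω i) ^ 2) P :=
  integrable_finsetSum _ fun i _ => ((memLp_const (b i)).add (hL2 i)).integrable_sq

theorem integral_sum_sq_const_add [Fintype ι] {ε : Ω → ι → ℝ} {σ2 : ℝ}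
    (hL2 : ∀ i, MemLp (fun ω => ε ω i) 2 P) (hmean : ∀ i, ∫ ω, ε ω i ∂P = 0)
    (hvar : ∀ i, ∫ ω, ε ω i ^ 2 ∂P = σ2) (b : ι → ℝ) :
    ∫ ω, ∑ i, (b i + ε ω i) ^ 2 ∂P = ∑ i, b i ^ 2 + Fintype.card ι * σ2 := by
  have hint (i : ι) : Integrable (fun ω => (b i + ε ω i) ^ 2) P :=
    ((memLp_const (b i)).add (hL2 i)).integrable_sq
  rw [integral_finsetSum _ fun i _ => hint i]
  simp [integral_const_add_sq (hL2 _) (hmean _), hvar, Finset.sum_add_distrib]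

end Noise

theorem stmt15_general {n p : ℕ}
    (X : Matrix (Fin n) (Fin p) ℝ) (βstar : Fin p → ℝ)
    (hA : (X * Xᵀ).PosDef)
    (lam1 lamn : ℝ)
    (hlam1 : IsGreatest (Set.range hA.1.eigenvalues) lam1)
    (hlamn : IsLeast (Set.range hA.1.eigenvalues) lamn)
    {Ω : Type*} [MeasurableSpace Ω] (P : Measure Ω) [IsProbabilityMeasure P]
    (eps : Ω → Fin n → ℝ) (σ2 : ℝ)
    (hL2 : ∀ i, MemLp (fun ω => eps ω i) 2 P)
    (hmean : ∀ i, ∫ ω, eps ω i ∂P = 0)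
    (hvar : ∀ i, ∫ ω, (eps ω i) ^ 2 ∂P = σ2)
    (k : ℕ) (hkn : k < n) :
    ∫ ω, (1 / n : ℝ) *
        sInf {r : ℝ | ∃ Q : Polynomial ℝ, Q.natDegree ≤ k ∧ Q.eval 0 = 1 ∧
          r = ∑ i, (((Polynomial.aeval (X * Xᵀ)) Q *ᵥ (X *ᵥ βstar + eps ω)) i) ^ 2} ∂P
      ≤ 4 * ((Real.sqrt (lam1 / lamn) - 1) / (Real.sqrt (lam1 / lamn) + 1)) ^ (2 * k) *
          ((1 / n : ℝ) * ∑ i, ((X *ᵥ βstar) i) ^ 2 + σ2) := by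
  have hn : (0 : ℝ) < n := Nat.cast_pos.mpr (Nat.zero_lt_of_lt hkn)
  have hlamn_pos : 0 < lamn := by
    obtain ⟨j, rfl⟩ := hlamn.1
    exact hA.eigenvalues_pos j
  have heig (i : Fin n) : hA.1.eigenvalues i ∈ Set.Icc lamn lam1 :=
    ⟨hlamn.2 ⟨i, rfl⟩, hlam1.2 ⟨i, rfl⟩⟩
  calc _ ≤ ∫ ω, (1 / n : ℝ) * (4 * ((√(lam1 / lamn) - 1) / (√(lam1 / lamn) + 1)) ^ (2 * k) *
          ∑ i, ((X *ᵥ βstar) i + eps ω i) ^ 2) ∂P := by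
        refine integral_mono_of_nonneg (ae_of_all _ fun ω => ?_)
          (((integrable_sum_sq_const_add hL2 _).const_mul _).const_mul _) (ae_of_all _ fun ω => ?_)
        · refine mul_nonneg (by positivity) (Real.sInf_nonneg ?_)
          rintro r ⟨Q, -, -, rfl⟩
          positivity
        · exact mul_le_mul_of_nonneg_left
            (hA.1.sInf_sum_sq_aeval_mulVec_le hlamn_pos (hlamn.2 hlam1.1) heig k _) (by positivity)
    _ = _ * ((1 / n : ℝ) * ∑ i, ((X *ᵥ βstar) i) ^ 2 + σ2) := by
        rw [integral_const_mul, integral_const_mul, integral_sum_sq_const_add hL2 hmean hvar,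
          Fintype.card_fin]
        field_simp

/-- for Y = Xβ* + ε with independent square-integrable centered noise
coordinates of variance σ², and 1 ≤ k < n,
E[(1/n) min_{Q∈P_{k,1}} ‖Q(XXᵀ)Y‖²] ≤ 4ρ^{2k} ((1/n)‖Xβ*‖² + σ²), where
ρ = (√C − 1)/(√C + 1) and C = λ_1/λ_n is the ratio of the extreme eigenvalues of XXᵀ. -/
theorem stmt15 {n p : ℕ}
    (X : Matrix (Fin n) (Fin p) ℝ) (βstar : Fin p → ℝ)
    (hA : (X * Xᵀ).PosDef)
    (lam1 lamn : ℝ)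
    (hlam1 : IsGreatest (Set.range hA.1.eigenvalues) lam1)
    (hlamn : IsLeast (Set.range hA.1.eigenvalues) lamn)
    {Ω : Type*} [MeasurableSpace Ω] (P : Measure Ω) [IsProbabilityMeasure P]
    (eps : Ω → Fin n → ℝ) (σ2 : ℝ)
    (hmeas : ∀ i, Measurable fun ω => eps ω i)
    (hindep : iIndepFun (fun i ω => eps ω i) P)
    (hL2 : ∀ i, MemLp (fun ω => eps ω i) 2 P)
    (hmean : ∀ i, ∫ ω, eps ω i ∂P = 0)
    (hvar : ∀ i, ∫ ω, (eps ω i) ^ 2 ∂P = σ2)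
    (k : ℕ) (hk1 : 1 ≤ k) (hkn : k < n) :
    ∫ ω, (1 / n : ℝ) *
        sInf {r : ℝ | ∃ Q : Polynomial ℝ, Q.natDegree ≤ k ∧ Q.eval 0 = 1 ∧
          r = ∑ i, (((Polynomial.aeval (X * Xᵀ)) Q *ᵥ (X *ᵥ βstar + eps ω)) i) ^ 2} ∂P
      ≤ 4 * ((Real.sqrt (lam1 / lamn) - 1) / (Real.sqrt (lam1 / lamn) + 1)) ^ (2 * k) *
          ((1 / n : ℝ) * ∑ i, ((X *ᵥ βstar) i) ^ 2 + σ2) :=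
  stmt15_general X βstar hA lam1 lamn hlam1 hlamn P eps σ2 hL2 hmean hvar k hkn
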